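/- arXiv:1606.04938 — 4 statements merged into one kernel-verified Lean document; each statement's English description precedes it below -/
import Mathlib

section
/- Let P₁, P₂ ⊆ ℝⁿ be full-dimensional anti-blocking polytopes and suppose P₁ is dual integral, i.e. P₁ = {x ∈ ℝⁿ : x ≥ 0 and ⟨d,x⟩ ≤ 1 for all d ∈ D} for some finite set D ⊆ ℤⁿ_{≥0}. Then for all positive integers a, b: |(a·P₁ − b·P₂) ∩ ℤⁿ| = Σ_{J ⊆ [n]} |relint(((a+1)·P₁)|_J) ∩ ℤⁿ| · |(b·P₂)|_{Jᶜ} ∩ ℤⁿ|, where relint denotes the interior taken within the coordinate subspace {x ∈ ℝⁿ : x_j = 0 for j ∉ J} (the affine span of ((a+1)·P₁)|_J), with the convention that for J = ∅ the set relint({0}) = {0}. -/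
open Set Pointwise

/-- `Q ⊆ ℝⁿ` is anti-blocking: contained in the nonnegative orthant and down-closed
within it. -/
def IsAntiBlocking {n : ℕ} (Q : Set (Fin n → ℝ)) : Prop :=
  (∀ x ∈ Q, ∀ i, 0 ≤ x i) ∧
  ∀ q ∈ Q, ∀ p : Fin n → ℝ, (∀ i, 0 ≤ p i ∧ p i ≤ q i) → p ∈ Q

/-- `Q` is a polytope: the convex hull of a finite set. -/
def IsPolytope {n : ℕ} (Q : Set (Fin n → ℝ)) : Prop :=
  ∃ V : Finset (Fin n → ℝ), Q = convexHull ℝ (V : Set (Fin n → ℝ))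

/-- The face `Q|_J = {x ∈ Q : x_j = 0 for j ∉ J}` of an anti-blocking polytope. -/
def restrictTo {n : ℕ} (Q : Set (Fin n → ℝ)) (J : Finset (Fin n)) :
    Set (Fin n → ℝ) :=
  {x ∈ Q | ∀ j ∉ J, x j = 0}

/-- The lattice points of `S ⊆ ℝⁿ`, as a set of integer vectors. -/
def intPoints {n : ℕ} (S : Set (Fin n → ℝ)) : Set (Fin n → ℤ) :=
  {m | (fun i => (m i : ℝ)) ∈ S}

/-- The relative interior of a subset `S` of the coordinate subspace
`{x : x_j = 0 for j ∉ J}`, i.e. the interior of `S` within that subspace. -/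
def relIntIn {n : ℕ} (J : Finset (Fin n)) (S : Set (Fin n → ℝ)) :
    Set (Fin n → ℝ) :=
  {x ∈ S | (∀ j ∉ J, x j = 0) ∧
    ∃ ε > 0, ∀ y : Fin n → ℝ, (∀ j ∉ J, y j = 0) → dist y x < ε → y ∈ S}

namespace ABaux
variable {n : ℕ}

lemma memScaled {D : Finset (Fin n → ℤ)} {P : Set (Fin n → ℝ)}
    (hP : P = {x | (∀ i, 0 ≤ x i) ∧ ∀ d ∈ D, ∑ i, (d i : ℝ) * x i ≤ 1})
    {c : ℝ} (hc : 0 < c) (x : Fin n → ℝ) :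
    x ∈ c • P ↔ (∀ i, 0 ≤ x i) ∧ ∀ d ∈ D, ∑ i, (d i : ℝ) * x i ≤ c := by
  rw [Set.mem_smul_set_iff_inv_smul_mem₀ hc.ne', hP]
  simp only [Set.mem_setOf_eq, Pi.smul_apply, smul_eq_mul]
  have hc' : 0 < c⁻¹ := inv_pos.2 hc
  constructor
  · rintro ⟨h1, h2⟩
    refine ⟨fun i => ?_, fun d hd => ?_⟩
    · have := h1 i; nlinarith
    · have := h2 d hd
      have heq : ∑ i, (d i : ℝ) * (c⁻¹ * x i) = c⁻¹ * ∑ i, (d i : ℝ) * x i := by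
        rw [Finset.mul_sum]; exact Finset.sum_congr rfl fun i _ => by ring
      rw [heq] at this
      calc ∑ i, (d i : ℝ) * x i = c * (c⁻¹ * ∑ i, (d i : ℝ) * x i) := by
            field_simp
        _ ≤ c * 1 := by nlinarith
        _ = c := mul_one c
  · rintro ⟨h1, h2⟩
    refine ⟨fun i => by have := h1 i; positivity, fun d hd => ?_⟩
    have := h2 d hd
    have heq : ∑ i, (d i : ℝ) * (c⁻¹ * x i) = c⁻¹ * ∑ i, (d i : ℝ) * x i := by
      rw [Finset.mul_sum]; exact Finset.sum_congr rfl fun i _ => by ring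
    rw [heq]
    calc c⁻¹ * ∑ i, (d i : ℝ) * x i ≤ c⁻¹ * c := by nlinarith
      _ = 1 := inv_mul_cancel₀ hc.ne'

lemma smulAB {Q : Set (Fin n → ℝ)} (hQ : IsAntiBlocking Q) {c : ℝ} (hc : 0 < c) :
    IsAntiBlocking (c • Q) := by
  obtain ⟨h0, hdown⟩ := hQ
  constructor
  · rintro x ⟨p, hp, rfl⟩ i
    simpa using mul_nonneg hc.le (h0 p hp i)
  · rintro q ⟨p, hp, rfl⟩ x hx
    refine ⟨c⁻¹ • x, hdown p hp _ (fun i => ?_), smul_inv_smul₀ hc.ne' x⟩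
    obtain ⟨hx0, hx1⟩ := hx i
    have hx1' : x i ≤ c * p i := hx1
    refine ⟨?_, ?_⟩
    · show 0 ≤ c⁻¹ * x i
      positivity
    · show c⁻¹ * x i ≤ p i
      rw [inv_mul_le_iff₀ hc]
      linarith

lemma subChar {A B : Set (Fin n → ℝ)} (hA : IsAntiBlocking A) (hB : IsAntiBlocking B)
    (x : Fin n → ℝ) :
    x ∈ A - B ↔ ((fun i => max (x i) 0) ∈ A ∧ (fun i => max (-x i) 0) ∈ B) := by
  constructor
  · intro hx
    rw [Set.mem_sub] at hx
    obtain ⟨u, hu, v, hv, huv⟩ := hx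
    have hxeq : ∀ i, x i = u i - v i := fun i => by
      have := congrFun huv i; simpa [Pi.sub_apply] using this.symm
    constructor
    · refine hA.2 u hu _ (fun i => ⟨le_max_right _ _, ?_⟩)
      exact max_le (by have := hB.1 v hv i; rw [hxeq i]; linarith) (hA.1 u hu i)
    · refine hB.2 v hv _ (fun i => ⟨le_max_right _ _, ?_⟩)
      exact max_le (by have := hA.1 u hu i; rw [hxeq i]; linarith) (hB.1 v hv i)
  · rintro ⟨h1, h2⟩
    rw [Set.mem_sub]
    refine ⟨_, h1, _, h2, ?_⟩
    funext i
    simp only [Pi.sub_apply]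
    rcases le_total (x i) 0 with h | h
    · simp [max_eq_right h, max_eq_left (by linarith : (0:ℝ) ≤ -x i)]
    · simp [max_eq_left h, max_eq_right (by linarith : -x i ≤ 0)]

lemma relIntChar {D : Finset (Fin n → ℤ)} {P : Set (Fin n → ℝ)}
    (hP : P = {x | (∀ i, 0 ≤ x i) ∧ ∀ d ∈ D, ∑ i, (d i : ℝ) * x i ≤ 1})
    {c : ℝ} (hc : 0 < c) (J : Finset (Fin n)) (x : Fin n → ℝ) :
    x ∈ relIntIn J (restrictTo (c • P) J) ↔
      (∀ j ∈ J, 0 < x j) ∧ (∀ j ∉ J, x j = 0) ∧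
      ∀ d ∈ D, ∑ i, (d i : ℝ) * x i < c := by
  constructor
  · rintro ⟨⟨hxP, hsupp⟩, -, ε, hε, hball⟩
    obtain ⟨hx0, hxd⟩ := (memScaled hP hc x).1 hxP
    have hε2 : 0 < ε / 2 := by linarith
    refine ⟨?_, hsupp, ?_⟩
    · intro j hj
      rcases lt_or_eq_of_le (hx0 j) with h | h
      · exact h
      exfalso
      set y := Function.update x j (x j - ε / 2) with hy
      have hyJ : ∀ k ∉ J, y k = 0 := by
        intro k hk
        have : k ≠ j := fun hkj => hk (hkj ▸ hj)
        rw [hy, Function.update_of_ne this]; exact hsupp k hk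
      have hdist : dist y x < ε := by
        rw [dist_pi_lt_iff hε]
        intro i
        rcases eq_or_ne i j with rfl | hne
        · rw [hy, Function.update_self, Real.dist_eq]
          rw [show x i - ε / 2 - x i = -(ε/2) by ring, abs_neg, abs_of_pos hε2]
          linarith
        · rw [hy, Function.update_of_ne hne, dist_self]; exact hε
      have hymem := hball y hyJ hdist
      have : 0 ≤ y j := ((memScaled hP hc y).1 hymem.1).1 j
      rw [hy, Function.update_self, ← h] at this
      linarith
    · intro d hd
      rcases lt_or_eq_of_le (hxd d hd) with h | h
      · exact h
      exfalso
      have hex : ∃ i, 0 < (d i : ℝ) * x i := by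
        by_contra hno
        push_neg at hno
        have : ∑ i, (d i : ℝ) * x i ≤ 0 := Finset.sum_nonpos fun i _ => hno i
        rw [h] at this; linarith
      obtain ⟨i, hi⟩ := hex
      have hxi : 0 < x i := by
        rcases lt_or_eq_of_le (hx0 i) with h' | h'
        · exact h'
        · rw [← h', mul_zero] at hi; linarith
      have hdi : 0 < (d i : ℝ) := by
        by_contra h'
        push_neg at h'
        nlinarith
      have hiJ : i ∈ J := by
        by_contra hiJ
        rw [hsupp i hiJ] at hxi; linarith
      set y := Function.update x i (x i + ε / 2) with hy
      have hyJ : ∀ k ∉ J, y k = 0 := by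
        intro k hk
        have : k ≠ i := fun hki => hk (hki ▸ hiJ)
        rw [hy, Function.update_of_ne this]; exact hsupp k hk
      have hdist : dist y x < ε := by
        rw [dist_pi_lt_iff hε]
        intro k
        rcases eq_or_ne k i with rfl | hne
        · rw [hy, Function.update_self, Real.dist_eq]
          rw [show x k + ε / 2 - x k = ε/2 by ring, abs_of_pos hε2]
          linarith
        · rw [hy, Function.update_of_ne hne, dist_self]; exact hε
      have hymem := hball y hyJ hdist
      have hsum : ∑ k, (d k : ℝ) * y k ≤ c := ((memScaled hP hc y).1 hymem.1).2 d hd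
      have heq : ∑ k, (d k : ℝ) * y k
          = (∑ k, (d k : ℝ) * x k) + (d i : ℝ) * (ε / 2) := by
        have hterm : ∀ k : Fin n, (d k : ℝ) * y k
            = (d k : ℝ) * x k + (if k = i then (d i : ℝ) * (ε / 2) else 0) := by
          intro k
          rcases eq_or_ne k i with rfl | hne
          · rw [hy, Function.update_self]; simp; ring
          · rw [hy, Function.update_of_ne hne, if_neg hne, add_zero]
        rw [Finset.sum_congr rfl fun k _ => hterm k, Finset.sum_add_distrib,
          Finset.sum_ite_eq' Finset.univ i]
        simp
      rw [heq, h] at hsum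
      nlinarith
  · rintro ⟨hpos, hsupp, hlt⟩
    have hU : IsOpen {y : Fin n → ℝ |
        (∀ j ∈ J, 0 < y j) ∧ ∀ d ∈ D, ∑ i, (d i : ℝ) * y i < c} := by
      have h1 : IsOpen {y : Fin n → ℝ | ∀ j ∈ J, 0 < y j} := by
        have : {y : Fin n → ℝ | ∀ j ∈ J, 0 < y j} = ⋂ j ∈ J, {y | 0 < y j} := by
          ext y; simp
        rw [this]
        exact isOpen_biInter_finset fun j _ =>
          isOpen_lt continuous_const (continuous_apply j)
      have h2 : IsOpen {y : Fin n → ℝ | ∀ d ∈ D, ∑ i, (d i : ℝ) * y i < c} := by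
        have : {y : Fin n → ℝ | ∀ d ∈ D, ∑ i, (d i : ℝ) * y i < c}
            = ⋂ d ∈ D, {y | ∑ i, (d i : ℝ) * y i < c} := by ext y; simp
        rw [this]
        exact isOpen_biInter_finset fun d _ =>
          isOpen_lt (continuous_finset_sum _ fun i _ =>
            continuous_const.mul (continuous_apply i)) continuous_const
      exact h1.inter h2
    have hxU : x ∈ {y : Fin n → ℝ |
        (∀ j ∈ J, 0 < y j) ∧ ∀ d ∈ D, ∑ i, (d i : ℝ) * y i < c} := ⟨hpos, hlt⟩
    obtain ⟨ε, hε, hball⟩ := Metric.isOpen_iff.1 hU x hxU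
    have hx0 : ∀ i, 0 ≤ x i := by
      intro i
      by_cases hi : i ∈ J
      · exact (hpos i hi).le
      · rw [hsupp i hi]
    refine ⟨⟨(memScaled hP hc x).2 ⟨hx0, fun d hd => (hlt d hd).le⟩, hsupp⟩,
      hsupp, ε, hε, ?_⟩
    intro y hyJ hdist
    have hyU := hball (Metric.mem_ball.2 hdist)
    refine ⟨(memScaled hP hc y).2 ⟨fun i => ?_, fun d hd => (hyU.2 d hd).le⟩, hyJ⟩
    by_cases hi : i ∈ J
    · exact (hyU.1 i hi).le
    · rw [hyJ i hi]

end ABaux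

/-- If `P₁, P₂` are full-dimensional anti-blocking polytopes and `P₁` is dual integral,
then for all positive integers `a, b`:
`|(aP₁ − bP₂) ∩ ℤⁿ| = ∑_{J ⊆ [n]} |relint(((a+1)P₁)|_J) ∩ ℤⁿ| · |(bP₂)|_{Jᶜ} ∩ ℤⁿ|`. -/
theorem antiBlocking_sub_lattice_point_count
    {n : ℕ} (P₁ P₂ : Set (Fin n → ℝ))
    (h₁poly : IsPolytope P₁) (h₁ab : IsAntiBlocking P₁)
    (h₁full : (interior P₁).Nonempty)
    (h₂poly : IsPolytope P₂) (h₂ab : IsAntiBlocking P₂)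
    (h₂full : (interior P₂).Nonempty)
    (hdualint : ∃ D : Finset (Fin n → ℤ), (∀ d ∈ D, ∀ i, 0 ≤ d i) ∧
      P₁ = {x | (∀ i, 0 ≤ x i) ∧ ∀ d ∈ D, ∑ i, (d i : ℝ) * x i ≤ 1})
    (a b : ℕ) (ha : 0 < a) (hb : 0 < b) :
    (intPoints ((a : ℝ) • P₁ - (b : ℝ) • P₂)).ncard =
      ∑ J : Finset (Fin n),
        (intPoints (relIntIn J (restrictTo (((a : ℝ) + 1) • P₁) J))).ncard *
        (intPoints (restrictTo ((b : ℝ) • P₂) Jᶜ)).ncard := by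
  classical
  obtain ⟨D, hD0, hP1eq⟩ := hdualint
  have haR : (0:ℝ) < (a:ℝ) := by exact_mod_cast ha
  have hbR : (0:ℝ) < (b:ℝ) := by exact_mod_cast hb
  have ha1R : (0:ℝ) < (a:ℝ) + 1 := by positivity
  have hD0' : ∀ d ∈ D, ∀ i, (0:ℝ) ≤ (d i : ℝ) := fun d hd i => by
    exact_mod_cast hD0 d hd i
  -- characterization of the A_J sets (relative-interior lattice points)
  have hAchar : ∀ (J : Finset (Fin n)) (u : Fin n → ℤ),
      u ∈ intPoints (relIntIn J (restrictTo (((a:ℝ) + 1) • P₁) J)) ↔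
        ((∀ j ∈ J, 1 ≤ u j) ∧ (∀ j ∉ J, u j = 0) ∧
          ∀ d ∈ D, ∑ i, d i * u i ≤ (a:ℤ)) := by
    intro J u
    rw [intPoints, Set.mem_setOf_eq, ABaux.relIntChar hP1eq ha1R]
    constructor
    · rintro ⟨h1, h2, h3⟩
      refine ⟨fun j hj => ?_, fun j hj => ?_, fun d hd => ?_⟩
      · have : (0:ℝ) < (u j : ℝ) := h1 j hj
        have : 0 < u j := by exact_mod_cast this
        omega
      · have : ((u j : ℝ)) = 0 := h2 j hj
        exact_mod_cast this
      · have h4 : ((∑ i, d i * u i : ℤ) : ℝ) < ((a:ℤ) + 1 : ℤ) := by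
          push_cast
          exact h3 d hd
        have : (∑ i, d i * u i : ℤ) < (a:ℤ) + 1 := by exact_mod_cast h4
        omega
    · rintro ⟨h1, h2, h3⟩
      refine ⟨fun j hj => ?_, fun j hj => ?_, fun d hd => ?_⟩
      · have := h1 j hj
        exact_mod_cast (by omega : (0:ℤ) < u j)
      · exact_mod_cast h2 j hj
      · have h4 : (∑ i, d i * u i : ℤ) < (a:ℤ) + 1 := by
          have := h3 d hd; omega
        have : ((∑ i, d i * u i : ℤ) : ℝ) < (((a:ℤ) + 1 : ℤ) : ℝ) := by
          exact_mod_cast h4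
        calc ∑ i, (d i : ℝ) * (u i : ℝ) = ((∑ i, d i * u i : ℤ) : ℝ) := by push_cast; ring_nf
          _ < (((a:ℤ) + 1 : ℤ) : ℝ) := this
          _ = (a:ℝ) + 1 := by push_cast; ring
  -- characterization of the B_J sets
  have hBchar : ∀ (J : Finset (Fin n)) (v : Fin n → ℤ),
      v ∈ intPoints (restrictTo ((b:ℝ) • P₂) Jᶜ) ↔
        ((fun i => (v i : ℝ)) ∈ (b:ℝ) • P₂ ∧ ∀ j ∈ J, v j = 0) := by
    intro J v
    simp only [intPoints, restrictTo, Set.mem_setOf_eq, Set.mem_sep_iff]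
    constructor <;> rintro ⟨h1, h2⟩ <;> refine ⟨h1, fun j hj => ?_⟩
    · have := h2 j (by simp [hj])
      exact_mod_cast this
    · have : j ∈ J := by simpa using hj
      exact_mod_cast h2 j this
  -- nonnegativity of b•P₂ members
  have h2nonneg : ∀ x ∈ (b:ℝ) • P₂, ∀ i, 0 ≤ x i := (ABaux.smulAB h₂ab hbR).1
  -- characterization of the lattice points of the Minkowski difference
  have hSchar : ∀ z : Fin n → ℤ,
      z ∈ intPoints ((a:ℝ) • P₁ - (b:ℝ) • P₂) ↔
        ((fun i => (max (z i) 0 : ℤ) : Fin n → ℤ) ∈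
            intPoints ((a:ℝ) • P₁) ∧
          (fun i => (max (-z i) 0 : ℤ) : Fin n → ℤ) ∈ intPoints ((b:ℝ) • P₂)) := by
    intro z
    rw [intPoints, Set.mem_setOf_eq, ABaux.subChar (ABaux.smulAB h₁ab haR) (ABaux.smulAB h₂ab hbR)]
    simp only [intPoints, Set.mem_setOf_eq]
    constructor <;> rintro ⟨h1, h2⟩ <;> refine ⟨?_, ?_⟩
    · convert h1 using 1; funext i; push_cast; ring_nf
    · convert h2 using 1; funext i; push_cast; ring_nf
    · convert h1 using 1; funext i; push_cast; ring_nf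
    · convert h2 using 1; funext i; push_cast; ring_nf
  -- For every coordinate there is a constraint with positive coefficient
  have hDi : ∀ i, ∃ d ∈ D, 1 ≤ d i := by
    intro i
    by_contra hno
    push_neg at hno
    have hzero : ∀ d ∈ D, d i = 0 := by
      intro d hd
      have := hno d hd
      have := hD0 d hd i
      omega
    obtain ⟨V, hV⟩ := h₁poly
    have hbd : Bornology.IsBounded P₁ := by
      rw [hV]
      exact isBounded_convexHull.2 V.finite_toSet.isBounded
    obtain ⟨C, hC⟩ := isBounded_iff_forall_norm_le.1 hbd
    have hC0 : 0 ≤ C := by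
      obtain ⟨x, hx⟩ := h₁full
      have := hC x (interior_subset hx)
      exact le_trans (norm_nonneg x) this
    set w : Fin n → ℝ := fun k => if k = i then C + 1 else 0 with hw
    have hwP : w ∈ P₁ := by
      rw [hP1eq]
      refine ⟨fun k => ?_, fun d hd => ?_⟩
      · rw [hw]; dsimp only; split <;> [linarith; exact le_rfl]
      · have : ∀ k, (d k : ℝ) * w k = 0 := by
          intro k
          rw [hw]; dsimp only
          split
          · rename_i hk
            subst hk
            rw [hzero d hd]; simp
          · simp
        rw [Finset.sum_congr rfl fun k _ => this k]
        simp
    have h1 : ‖w‖ ≤ C := hC w hwP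
    have h2 : ‖w i‖ ≤ ‖w‖ := norm_le_pi_norm w i
    have h3 : w i = C + 1 := by rw [hw]; simp
    rw [h3] at h2
    rw [Real.norm_eq_abs, abs_of_pos (by linarith)] at h2
    linarith
  -- coordinatewise bound on real points satisfying the P₁ constraints
  have hcoordR : ∀ (x : Fin n → ℝ), (∀ i, 0 ≤ x i) →
      (∀ d ∈ D, ∑ i, (d i : ℝ) * x i ≤ (a:ℝ)) → ∀ i, x i ≤ (a:ℝ) := by
    intro x hx0 hxd i
    obtain ⟨d, hd, hdi⟩ := hDi i
    have hdi' : (1:ℝ) ≤ (d i : ℝ) := by exact_mod_cast hdi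
    have h1 : x i ≤ (d i : ℝ) * x i := by nlinarith [hx0 i]
    have h2 : (d i : ℝ) * x i ≤ ∑ k, (d k : ℝ) * x k :=
      Finset.single_le_sum (fun k _ => mul_nonneg (hD0' d hd k) (hx0 k))
        (Finset.mem_univ i)
    linarith [hxd d hd]
  -- coordinatewise bound, integer version
  have hcoordZ : ∀ (u : Fin n → ℤ), (∀ i, 0 ≤ u i) →
      (∀ d ∈ D, ∑ i, d i * u i ≤ (a:ℤ)) → ∀ i, u i ≤ (a:ℤ) := by
    intro u hu0 hud i
    obtain ⟨d, hd, hdi⟩ := hDi i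
    have h1 : u i ≤ d i * u i := le_mul_of_one_le_left (hu0 i) hdi
    have h2 : d i * u i ≤ ∑ k, d k * u k :=
      Finset.single_le_sum (fun k _ => mul_nonneg (hD0 d hd k) (hu0 k))
        (Finset.mem_univ i)
    linarith [hud d hd]
  -- uniform coordinate bound for P₂
  have hC2 : ∃ C₂ : ℝ, 0 ≤ C₂ ∧ ∀ x ∈ (b:ℝ) • P₂, ∀ i, |x i| ≤ C₂ := by
    obtain ⟨V, hV⟩ := h₂poly
    have hbd : Bornology.IsBounded P₂ := by
      rw [hV]
      exact isBounded_convexHull.2 V.finite_toSet.isBounded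
    obtain ⟨C, hC⟩ := isBounded_iff_forall_norm_le.1 hbd
    have hC0 : 0 ≤ C := by
      obtain ⟨x, hx⟩ := h₂full
      exact le_trans (norm_nonneg x) (hC x (interior_subset hx))
    refine ⟨(b:ℝ) * C, by positivity, ?_⟩
    rintro x ⟨p, hp, rfl⟩ i
    have h1 : |p i| ≤ C := le_trans (norm_le_pi_norm p i) (hC p hp)
    show |(b:ℝ) * p i| ≤ (b:ℝ) * C
    rw [abs_mul, abs_of_pos hbR]
    nlinarith [abs_nonneg (p i)]
  obtain ⟨C₂, hC20, hC2b⟩ := hC2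
  set M : ℤ := ⌈C₂⌉ with hM
  have hMb : ∀ x ∈ (b:ℝ) • P₂, ∀ i, |x i| ≤ (M:ℝ) :=
    fun x hx i => le_trans (hC2b x hx i) (Int.le_ceil C₂)
  -- finiteness
  have hboxfin : ∀ lo hi : ℤ, {z : Fin n → ℤ | ∀ i, z i ∈ Set.Icc lo hi}.Finite :=
    fun lo hi => Set.Finite.pi' fun _ => Set.finite_Icc lo hi
  have hfinA : ∀ J : Finset (Fin n),
      (intPoints (relIntIn J (restrictTo (((a:ℝ) + 1) • P₁) J))).Finite := by
    intro J
    refine (hboxfin 0 (a:ℤ)).subset ?_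
    intro u hu
    obtain ⟨h1, h2, h3⟩ := (hAchar J u).1 hu
    have hu0 : ∀ i, 0 ≤ u i := by
      intro i
      by_cases hi : i ∈ J
      · linarith [h1 i hi]
      · rw [h2 i hi]
    exact fun i => ⟨hu0 i, hcoordZ u hu0 h3 i⟩
  have hfinB : ∀ J : Finset (Fin n),
      (intPoints (restrictTo ((b:ℝ) • P₂) Jᶜ)).Finite := by
    intro J
    refine (hboxfin (-M) M).subset ?_
    intro v hv
    obtain ⟨h1, -⟩ := (hBchar J v).1 hv
    intro i
    have := hMb _ h1 i
    have h2 : |(v i : ℝ)| ≤ (M:ℝ) := this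
    rw [abs_le] at h2
    constructor
    · exact_mod_cast h2.1
    · exact_mod_cast h2.2
  have hfinS : (intPoints ((a:ℝ) • P₁ - (b:ℝ) • P₂)).Finite := by
    refine (hboxfin (-M) ((a:ℤ) ⊔ M)).subset ?_
    intro z hz
    obtain ⟨h1, h2⟩ := (hSchar z).1 hz
    rw [intPoints, Set.mem_setOf_eq, ABaux.memScaled hP1eq haR] at h1
    obtain ⟨h10, h1d⟩ := h1
    intro i
    constructor
    · have := hMb _ h2 i
      rw [abs_le] at this
      have h3 : -(M:ℝ) ≤ (max (-z i) 0 : ℤ) := this.1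
      have h4 : (-z i : ℝ) ≤ ((max (-z i) 0 : ℤ) : ℝ) := by
        push_cast
        exact le_max_left _ _
      have : (-(M:ℝ)) ≤ -(-(z i):ℝ) ∨ True := Or.inr trivial
      have h5 : ((max (-z i) 0 : ℤ) : ℝ) ≤ (M:ℝ) := this.elim (fun _ => hMb _ h2 i |> abs_le.1 |>.2) (fun _ => (abs_le.1 (hMb _ h2 i)).2)
      have h6 : (-z i : ℝ) ≤ (M:ℝ) := le_trans h4 h5
      have : -z i ≤ M := by exact_mod_cast h6
      omega
    · have h7 := hcoordR _ (fun k => by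
        have : (0:ℝ) ≤ ((max (z k) 0 : ℤ) : ℝ) := by push_cast; exact le_max_right _ _
        exact this) h1d i
      have h8 : (z i : ℝ) ≤ ((max (z i) 0 : ℤ) : ℝ) := by push_cast; exact le_max_left _ _
      have h9 : (z i : ℝ) ≤ (a:ℝ) := le_trans h8 h7
      have : z i ≤ (a:ℤ) := by exact_mod_cast h9
      exact le_trans this le_sup_left
  -- the key recovery identities
  have hkey : ∀ (J : Finset (Fin n)) (u v : Fin n → ℤ),
      (∀ j ∈ J, 1 ≤ u j) → (∀ j ∉ J, u j = 0) →
      (∀ j ∈ J, v j = 0) → (∀ i, 0 ≤ v i) →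
      ((fun i => max ((u - v) i) 0) = u ∧ (fun i => max (-((u - v) i)) 0) = v) := by
    intro J u v hu1 hu2 hv1 hv0
    constructor <;> funext i <;> simp only [Pi.sub_apply] <;> by_cases hi : i ∈ J
    · rw [hv1 i hi, sub_zero]
      exact max_eq_left (by linarith [hu1 i hi])
    · rw [hu2 i hi, zero_sub]
      exact max_eq_right (by linarith [hv0 i])
    · rw [hv1 i hi, sub_zero]
      exact max_eq_right (by linarith [hu1 i hi])
    · rw [hu2 i hi, zero_sub, neg_neg]
      exact max_eq_left (hv0 i)
  -- main counting
  rw [Set.ncard_eq_toFinset_card _ hfinS]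
  rw [Finset.card_eq_sum_card_fiberwise
    (f := fun z : Fin n → ℤ => Finset.univ.filter fun i => 0 < z i)
    (t := Finset.univ) (fun x _ => Finset.mem_univ _)]
  refine Finset.sum_congr rfl fun J _ => ?_
  rw [Set.ncard_eq_toFinset_card _ (hfinA J), Set.ncard_eq_toFinset_card _ (hfinB J),
    ← Finset.card_product]
  refine Finset.card_bij'
    (fun z _ => ((fun i => max (z i) 0, fun i => max (-z i) 0) :
      (Fin n → ℤ) × (Fin n → ℤ)))
    (fun p _ => p.1 - p.2) ?_ ?_ ?_ ?_
  · -- forward map lands in the product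
    intro z hz
    rw [Finset.mem_filter, Set.Finite.mem_toFinset] at hz
    obtain ⟨hzS, hzJ⟩ := hz
    have hJiff : ∀ i, 0 < z i ↔ i ∈ J := by
      intro i; rw [← hzJ]; simp
    obtain ⟨hpos, hneg⟩ := (hSchar z).1 hzS
    simp only [intPoints, Set.mem_setOf_eq] at hpos hneg
    rw [Finset.mem_product, Set.Finite.mem_toFinset, Set.Finite.mem_toFinset]
    constructor
    · refine (hAchar J _).2 ⟨fun j hj => ?_, fun j hj => ?_, fun d hd => ?_⟩
      · have h1 : 0 < z j := (hJiff j).2 hj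
        exact le_trans (by omega) (le_max_left (z j) 0)
      · have h1 : ¬ 0 < z j := fun h => hj ((hJiff j).1 h)
        exact max_eq_right (by omega)
      · have hr := ((ABaux.memScaled hP1eq haR _).1 hpos).2 d hd
        have h2 : ((∑ i, d i * max (z i) 0 : ℤ) : ℝ) ≤ ((a : ℤ) : ℝ) := by
          push_cast
          exact_mod_cast hr
        exact_mod_cast h2
    · refine (hBchar J _).2 ⟨hneg, fun j hj => ?_⟩
      have h1 : 0 < z j := (hJiff j).2 hj
      exact max_eq_right (by omega)
  · -- backward map lands in the fiber
    intro p hp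
    rw [Finset.mem_product, Set.Finite.mem_toFinset, Set.Finite.mem_toFinset] at hp
    obtain ⟨hu, hv⟩ := hp
    obtain ⟨hu1, hu2, hu3⟩ := (hAchar J p.1).1 hu
    obtain ⟨hv1, hv2⟩ := (hBchar J p.2).1 hv
    have hv0 : ∀ i, 0 ≤ p.2 i := by
      intro i
      have := h2nonneg _ hv1 i
      exact_mod_cast this
    obtain ⟨hkey1, hkey2⟩ := hkey J p.1 p.2 hu1 hu2 hv2 hv0
    rw [Finset.mem_filter, Set.Finite.mem_toFinset]
    constructor
    · refine (hSchar _).2 ⟨?_, ?_⟩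
      · show (fun i => max ((p.1 - p.2) i) 0) ∈ intPoints ((a:ℝ) • P₁)
        rw [hkey1]
        simp only [intPoints, Set.mem_setOf_eq]
        refine (ABaux.memScaled hP1eq haR _).2 ⟨fun i => ?_, fun d hd => ?_⟩
        · by_cases hi : i ∈ J
          · have := hu1 i hi
            exact_mod_cast (by omega : (0:ℤ) ≤ p.1 i)
          · rw [hu2 i hi]; norm_num
        · have h2 : ((∑ i, d i * p.1 i : ℤ) : ℝ) ≤ ((a : ℤ) : ℝ) := by
            exact_mod_cast hu3 d hd
          calc ∑ i, (d i : ℝ) * (p.1 i : ℝ) = ((∑ i, d i * p.1 i : ℤ) : ℝ) := by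
                push_cast; ring_nf
            _ ≤ ((a : ℤ) : ℝ) := h2
            _ = (a : ℝ) := by push_cast; ring
      · show (fun i => max (-((p.1 - p.2) i)) 0) ∈ intPoints ((b:ℝ) • P₂)
        rw [hkey2]
        exact hv1
    · ext i
      simp only [Finset.mem_filter, Finset.mem_univ, true_and, Pi.sub_apply]
      constructor
      · intro h
        by_contra hi
        have := hu2 i hi
        have := hv0 i
        omega
      · intro hi
        have := hu1 i hi
        have := hv2 i hi
        omega
  · -- left inverse
    intro z hz
    funext i
    simp only [Pi.sub_apply]
    rcases le_total (z i) 0 with h | h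
    · rw [max_eq_right h, max_eq_left (by omega : (0:ℤ) ≤ -z i)]; omega
    · rw [max_eq_left h, max_eq_right (by omega : -z i ≤ (0:ℤ))]; omega
  · -- right inverse
    intro p hp
    rw [Finset.mem_product, Set.Finite.mem_toFinset, Set.Finite.mem_toFinset] at hp
    obtain ⟨hu, hv⟩ := hp
    obtain ⟨hu1, hu2, hu3⟩ := (hAchar J p.1).1 hu
    obtain ⟨hv1, hv2⟩ := (hBchar J p.2).1 hv
    have hv0 : ∀ i, 0 ≤ p.2 i := by
      intro i
      have := h2nonneg _ hv1 i
      exact_mod_cast this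
    obtain ⟨hkey1, hkey2⟩ := hkey J p.1 p.2 hu1 hu2 hv2 hv0
    exact Prod.ext hkey1 hkey2
end

section
/- Let P₁, P₂ ⊆ ℝⁿ be full-dimensional anti-blocking polytopes. Then the n-dimensional Lebesgue volume of the Minkowski difference satisfies vol(P₁ − P₂) = Σ_{J ⊆ [n]} vol_{|J|}(π_J(P₁|_J)) · vol_{n−|J|}(π_{Jᶜ}(P₂|_{Jᶜ})), where π_J : ℝⁿ → ℝ^J is the coordinate projection onto the coordinates in J, vol_k denotes k-dimensional Lebesgue measure, and the 0-dimensional volume of a nonempty set is 1. -/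
open Set Pointwise MeasureTheory

/-- Coordinate projection `π_J : ℝⁿ → ℝ^J`. -/
def projTo {n : ℕ} (J : Finset (Fin n)) (x : Fin n → ℝ) : {i // i ∈ J} → ℝ :=
  fun j => x j.1

/-!
The closed orthants `O_J = {x | x_i ≥ 0 for i ∈ J, x_i ≤ 0 for i ∉ J}` cover `ℝⁿ` and
pairwise meet in null sets; being measurable, they split the outer measure of *any* set,
so `vol(P₁ - P₂) = ∑_J vol((P₁ - P₂) ∩ O_J)`. For anti-blocking `P₁, P₂`, a point `x ∈ O_J`
lies in `P₁ - P₂` iff its positive part lies in `P₁|_J` and its negative part in `P₂|_{Jᶜ}`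
(shrink the two summands of a representation `x = p - q`). Hence, in the coordinates
`ℝ^J × ℝ^{Jᶜ}`, the piece `(P₁ - P₂) ∩ O_J` is the product `π_J(P₁|_J) × -π_{Jᶜ}(P₂|_{Jᶜ})`,
and its volume is the product of the two volumes.
-/

open Function

def signOrthant {ι : Type*} (J : Finset ι) : Set (ι → ℝ) :=
  {x | (∀ i ∈ J, 0 ≤ x i) ∧ ∀ i ∉ J, x i ≤ 0}

theorem MeasureTheory.measure_eq_tsum_inter {α ι : Type*} [MeasurableSpace α] [Countable ι]
    {μ : Measure α} {s : ι → Set α} (hcover : ⋃ i, s i = univ) (hm : ∀ i, MeasurableSet (s i))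
    (hd : Pairwise (AEDisjoint μ on s)) (t : Set α) : μ t = ∑' i, μ (t ∩ s i) := by
  conv_lhs => rw [← μ.restrict_univ, ← hcover,
    Measure.restrict_iUnion_ae hd fun i => (hm i).nullMeasurableSet, Measure.sum_apply_of_countable]
  simp only [Measure.restrict_apply' (hm _)]

section
variable {ι : Type*}

theorem iUnion_signOrthant [Fintype ι] : ⋃ J : Finset ι, signOrthant J = univ := by
  classical
  refine eq_univ_of_forall fun x => mem_iUnion.2 ⟨({i | 0 ≤ x i} : Finset ι),
    fun i hi => by simpa using hi, fun i hi => (not_le.1 (by simpa using hi)).le⟩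

theorem measurableSet_signOrthant [Countable ι] (J : Finset ι) :
    MeasurableSet (signOrthant J) := by
  simp only [signOrthant, ofPred_and, ofPred_forall]
  measurability

theorem aedisjoint_signOrthant [Fintype ι] :
    Pairwise (AEDisjoint volume on (signOrthant : Finset ι → Set (ι → ℝ))) := by
  classical
  intro J K hJK
  obtain ⟨i, hi⟩ := Finset.symmDiff_nonempty.2 hJK
  refine measure_mono_null (fun x ⟨hxJ, hxK⟩ => ?_) (Measure.pi_hyperplane _ i 0)
  rcases Finset.mem_symmDiff.1 hi with ⟨hiJ, hiK⟩ | ⟨hiK, hiJ⟩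
  · exact le_antisymm (hxK.2 i hiK) (hxJ.1 i hiJ)
  · exact le_antisymm (hxJ.2 i hiJ) (hxK.1 i hiK)

end

section
variable {n : ℕ}

def coordSplit (J : Finset (Fin n)) : (Fin n → ℝ) ≃ᵐ (J → ℝ) × (↥Jᶜ → ℝ) :=
  (MeasurableEquiv.piEquivPiSubtypeProd (fun _ => ℝ) (· ∈ J)).trans <|
    MeasurableEquiv.prodCongr (MeasurableEquiv.refl _) <|
      MeasurableEquiv.piCongrLeft (fun _ => ℝ) <|
        Equiv.subtypeEquivRight fun _ => Finset.mem_compl.symm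

theorem coordSplit_apply (J : Finset (Fin n)) (x : Fin n → ℝ) :
    coordSplit J x = (projTo J x, projTo Jᶜ x) :=
  rfl

theorem volume_preserving_coordSplit (J : Finset (Fin n)) :
    MeasurePreserving (coordSplit J) := by
  refine (volume_preserving_piEquivPiSubtypeProd (fun _ => ℝ) (· ∈ J)).trans ?_
  rw [Measure.volume_eq_prod, Measure.volume_eq_prod]
  -- `convert` reconciles the differing `Fintype` instances on the index subtypes.
  convert (MeasurePreserving.id volume).prod <|
    volume_measurePreserving_piCongrLeft (fun _ => ℝ) <|
      Equiv.subtypeEquivRight fun (i : Fin n) => (Finset.mem_compl (s := J) (a := i)).symm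
  · rfl
  · infer_instance

theorem projTo_piecewise (J : Finset (Fin n)) (f g : Fin n → ℝ) [∀ i, Decidable (i ∈ J)] :
    projTo J (J.piecewise f g) = projTo J f :=
  funext fun i => J.piecewise_eq_of_mem f g i.2

theorem IsAntiBlocking.piecewise_mem_restrictTo {Q : Set (Fin n → ℝ)} (hQ : IsAntiBlocking Q)
    {p : Fin n → ℝ} (hp : p ∈ Q) {J : Finset (Fin n)} {f : Fin n → ℝ}
    (hf : ∀ i ∈ J, 0 ≤ f i ∧ f i ≤ p i) : J.piecewise f 0 ∈ restrictTo Q J := by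
  classical
  refine ⟨hQ.2 p hp _ fun i => ?_, fun i hi => J.piecewise_eq_of_notMem f 0 hi⟩
  by_cases hi : i ∈ J
  · simpa [hi] using hf i hi
  · simpa [hi] using hQ.1 p hp i

theorem sub_inter_signOrthant {P₁ P₂ : Set (Fin n → ℝ)} (h₁ : IsAntiBlocking P₁)
    (h₂ : IsAntiBlocking P₂) (J : Finset (Fin n)) :
    (P₁ - P₂) ∩ signOrthant J =
      coordSplit J ⁻¹' ((projTo J '' restrictTo P₁ J) ×ˢ (-(projTo Jᶜ '' restrictTo P₂ Jᶜ))) := by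
  classical
  ext x
  simp only [mem_inter_iff, mem_preimage, coordSplit_apply, mem_prod, mem_neg, mem_image]
  constructor
  · rintro ⟨hx, hpos, hneg⟩
    obtain ⟨p, hp, q, hq, rfl⟩ := Set.mem_sub.1 hx
    refine ⟨⟨_, h₁.piecewise_mem_restrictTo hp fun i hi => ?_, projTo_piecewise J _ _⟩,
      ⟨_, h₂.piecewise_mem_restrictTo (f := q - p) hq fun i hi => ?_, ?_⟩⟩
    · exact ⟨hpos i hi, sub_le_self _ (h₂.1 q hq i)⟩
    · exact ⟨sub_nonneg.2 (sub_nonpos.1 (hneg i (Finset.mem_compl.1 hi))),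
        sub_le_self _ (h₁.1 p hp i)⟩
    · rw [projTo_piecewise, ← neg_sub]
      rfl
  · rintro ⟨⟨p, ⟨hp, hp0⟩, hpx⟩, q, ⟨hq, hq0⟩, hqx⟩
    have hx : x = p - q := by
      ext i
      by_cases hi : i ∈ J
      · have hpi : p i = x i := congrFun hpx ⟨i, hi⟩
        simp [← hpi, hq0 i (Finset.notMem_compl.2 hi)]
      · have hqi : q i = -x i := congrFun hqx ⟨i, Finset.mem_compl.2 hi⟩
        simp [hqi, hp0 i hi]
    subst hx
    refine ⟨sub_mem_sub hp hq, fun i hi => ?_, fun i hi => ?_⟩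
    · simpa [hq0 i (Finset.notMem_compl.2 hi)] using h₁.1 p hp i
    · simpa [hp0 i hi] using h₂.1 q hq i

theorem volume_preimage_coordSplit_prod (J : Finset (Fin n)) (A : Set (J → ℝ))
    (B : Set (↥Jᶜ → ℝ)) : volume (coordSplit J ⁻¹' (A ×ˢ B)) = volume A * volume B := by
  rw [(volume_preserving_coordSplit J).measure_preimage_equiv, Measure.volume_eq_prod,
    Measure.prod_prod]

end

theorem volume_antiBlocking_sub_general
    {n : ℕ} (P₁ P₂ : Set (Fin n → ℝ))
    (h₁ab : IsAntiBlocking P₁)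
    (h₂ab : IsAntiBlocking P₂) :
    volume (P₁ - P₂) =
      ∑ J : Finset (Fin n),
        volume (projTo J '' restrictTo P₁ J) *
        volume (projTo Jᶜ '' restrictTo P₂ Jᶜ) := by
  rw [measure_eq_tsum_inter iUnion_signOrthant measurableSet_signOrthant aedisjoint_signOrthant,
    tsum_fintype]
  refine Finset.sum_congr rfl fun J _ => ?_
  rw [sub_inter_signOrthant h₁ab h₂ab, volume_preimage_coordSplit_prod, Measure.measure_neg]

/-- For full-dimensional anti-blocking polytopes `P₁, P₂ ⊆ ℝⁿ`,
`vol(P₁ − P₂) = ∑_{J ⊆ [n]} vol_{|J|}(π_J(P₁|_J)) · vol_{n−|J|}(π_{Jᶜ}(P₂|_{Jᶜ}))`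
(each factor is the Lebesgue volume in the corresponding coordinate subspace;
the `0`-dimensional volume of a nonempty set is `1`). -/
theorem volume_antiBlocking_sub
    {n : ℕ} (P₁ P₂ : Set (Fin n → ℝ))
    (h₁poly : IsPolytope P₁) (h₁ab : IsAntiBlocking P₁)
    (h₁full : (interior P₁).Nonempty)
    (h₂poly : IsPolytope P₂) (h₂ab : IsAntiBlocking P₂)
    (h₂full : (interior P₂).Nonempty) :
    volume (P₁ - P₂) =
      ∑ J : Finset (Fin n),
        volume (projTo J '' restrictTo P₁ J) *
        volume (projTo Jᶜ '' restrictTo P₂ Jᶜ) :=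
  volume_antiBlocking_sub_general P₁ P₂ h₁ab h₂ab
end

section
/- Let (P,⪯₊,⪯₋) be a compatible double poset and let Ψ : ℝ^P → ℝ^P be the double transfer map, Ψ(g) = Φ_{⪯₊}(g⁺) − Φ_{⪯₋}(g⁻). Then Ψ is a bijection of ℝ^P onto itself, and it restricts to a bijection of ℤ^P onto ℤ^P (i.e., Ψ is lattice-preserving). -/
open Set Pointwise

/-- A double poset is compatible if some linear order refines both partial orders. -/
def Compatible (P : Type*) (lep lem : P → P → Prop) : Prop :=
  ∃ l : P → P → Prop, IsLinearOrder P l ∧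
    (∀ a b, lep a b → l a b) ∧ (∀ a b, lem a b → l a b)

/-- The inverse transfer map of a poset `(P, le)` applied to `h : P → ℝ`:
`(Φ h)(b)` is the maximum of `∑_{a ∈ C} h(a)` over chains `C` ending at `b`. -/
noncomputable def transferInv {P : Type*} [Fintype P] (le : P → P → Prop)
    (h : P → ℝ) (b : P) : ℝ :=
  sSup {s : ℝ | ∃ C : Finset P, (∀ a ∈ C, ∀ a' ∈ C, le a a' ∨ le a' a) ∧
    b ∈ C ∧ (∀ a ∈ C, le a b) ∧ s = ∑ a ∈ C, h a}

/-- The double transfer map `Ψ(g) = Φ_{⪯₊}(g⁺) − Φ_{⪯₋}(g⁻)` of a double poset. -/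
noncomputable def doubleTransfer {P : Type*} [Fintype P]
    (lep lem : P → P → Prop) (g : P → ℝ) : P → ℝ :=
  fun b => transferInv lep (fun a => max (g a) 0) b -
    transferInv lem (fun a => max (-(g a)) 0) b


/-!
Removing `b` from a chain ending at `b` gives `Ψ(g)(b) = g(b) + T(g)(b)`, where `T(g)(b)` is a
difference of two maxima over chains strictly below `b`, so it only sees the values of `g` at
elements strictly below `b` in `⪯₊` or `⪯₋`. Compatibility makes this relation well-founded, so
`Ψ(g) = f` is solved uniquely by the recursion `g(b) = f(b) - T(g)(b)`. Each maximum is attained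
at a chain, hence `T(g)(b)` is an integer as soon as `g` is integral below `b`, and the recursion
stays in `ℤ^P`.
-/

section DependsOnPredecessors

variable {P α : Type*} [AddCommGroup α] {r : P → P → Prop} {T : (P → α) → P → α}

def DependsOnPredecessors (r : P → P → Prop) (T : (P → α) → P → α) : Prop :=
  ∀ g g' b, (∀ a, r a b → g a = g' a) → T g b = T g' b

theorem injective_add_of_dependsOnPredecessors (hr : WellFounded r)
    (hT : DependsOnPredecessors r T) : Function.Injective fun g => g + T g := by
  intro g g' hgg'
  funext b
  induction b using hr.induction with
  | _ b ih =>
    simpa only [Pi.add_apply, hT g g' b ih, add_left_inj] using congrFun hgg' b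

theorem exists_eq_sub_of_dependsOnPredecessors (hr : WellFounded r)
    (hT : DependsOnPredecessors r T) (f : P → α) : ∃ g : P → α, ∀ b, g b = f b - T g b := by
  classical
  let F (b : P) (gBelow : ∀ a, r a b → α) : α :=
    f b - T (fun a => if h : r a b then gBelow a h else 0) b
  refine ⟨hr.fix F, fun b => ?_⟩
  rw [hr.fix_eq F b]
  exact congrArg (f b - ·) (hT _ _ b fun a ha => dif_pos ha)

theorem bijective_add_of_dependsOnPredecessors (hr : WellFounded r)
    (hT : DependsOnPredecessors r T) : Function.Bijective fun g => g + T g := by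
  refine ⟨injective_add_of_dependsOnPredecessors hr hT, fun f => ?_⟩
  obtain ⟨g, hg⟩ := exists_eq_sub_of_dependsOnPredecessors hr hT f
  exact ⟨g, funext fun b => by simp [hg b]⟩

theorem bijOn_add_of_dependsOnPredecessors (hr : WellFounded r)
    (hT : DependsOnPredecessors r T) (S : AddSubgroup α)
    (hTS : ∀ g b, (∀ a, r a b → g a ∈ S) → T g b ∈ S) :
    Set.BijOn (fun g => g + T g) {g | ∀ a, g a ∈ S} {g | ∀ a, g a ∈ S} := by
  refine ⟨fun g hg b => S.add_mem (hg b) (hTS g b fun a _ => hg a),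
    (injective_add_of_dependsOnPredecessors hr hT).injOn, fun f hf => ?_⟩
  obtain ⟨g, hg⟩ := exists_eq_sub_of_dependsOnPredecessors hr hT f
  have hgS : ∀ b, g b ∈ S := fun b => by
    induction b using hr.induction with
    | _ b ih => exact hg b ▸ S.sub_mem (hf b) (hTS g b ih)
  exact ⟨g, hgS, funext fun b => by simp [hg b]⟩

end DependsOnPredecessors

section Transfer

variable {P : Type*}

def chainsBelow (le : P → P → Prop) (b : P) : Set (Finset P) :=
  {C | (∀ a ∈ C, ∀ a' ∈ C, le a a' ∨ le a' a) ∧ ∀ a ∈ C, le a b ∧ a ≠ b}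

noncomputable def transferBelow (le : P → P → Prop) (h : P → ℝ) (b : P) : ℝ :=
  sSup ((fun C => ∑ a ∈ C, h a) '' chainsBelow le b)

theorem isGreatest_transferBelow [Finite P] (le : P → P → Prop) (h : P → ℝ) (b : P) :
    IsGreatest ((fun C => ∑ a ∈ C, h a) '' chainsBelow le b) (transferBelow le h b) := by
  have hne : (chainsBelow le b).Nonempty := ⟨∅, by simp [chainsBelow]⟩
  obtain ⟨C, hC, hmax⟩ :=
    (chainsBelow le b).exists_max_image (fun C => ∑ a ∈ C, h a) (Set.toFinite _) hne
  have hC' : IsGreatest ((fun C => ∑ a ∈ C, h a) '' chainsBelow le b) (∑ a ∈ C, h a) :=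
    ⟨⟨C, hC, rfl⟩, by rintro _ ⟨C', hC', rfl⟩; exact hmax C' hC'⟩
  rwa [transferBelow, hC'.csSup_eq]

theorem transferInv_eq_add_transferBelow [Fintype P] {le : P → P → Prop} (hrefl : ∀ a, le a a)
    (h : P → ℝ) (b : P) : transferInv le h b = h b + transferBelow le h b := by
  classical
  have hset : {s : ℝ | ∃ C : Finset P, (∀ a ∈ C, ∀ a' ∈ C, le a a' ∨ le a' a) ∧
      b ∈ C ∧ (∀ a ∈ C, le a b) ∧ s = ∑ a ∈ C, h a} =
      (h b + ·) '' ((fun C => ∑ a ∈ C, h a) '' chainsBelow le b) := by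
    ext s
    constructor
    · rintro ⟨C, hchain, hbC, hle, rfl⟩
      refine ⟨_, ⟨C.erase b, ⟨fun a ha a' ha' => ?_, fun a ha => ?_⟩, rfl⟩,
        Finset.add_sum_erase C h hbC⟩
      · exact hchain a (Finset.mem_of_mem_erase ha) a' (Finset.mem_of_mem_erase ha')
      · exact ⟨hle a (Finset.mem_of_mem_erase ha), Finset.ne_of_mem_erase ha⟩
    · rintro ⟨_, ⟨C, ⟨hchain, hbelow⟩, rfl⟩, rfl⟩
      have hbC : b ∉ C := fun hbC => (hbelow b hbC).2 rfl
      refine ⟨insert b C, ?_, C.mem_insert_self b, ?_, (Finset.sum_insert hbC).symm⟩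
      · simp only [Finset.mem_insert]
        rintro a (rfl | ha) a' (rfl | ha')
        exacts [Or.inl (hrefl _), Or.inr (hbelow _ ha').1, Or.inl (hbelow _ ha).1,
          hchain _ ha _ ha']
      · simp only [Finset.mem_insert]
        rintro a (rfl | ha)
        exacts [hrefl _, (hbelow _ ha).1]
  rw [transferInv, hset,
    ((add_right_mono (a := h b)).map_isGreatest (isGreatest_transferBelow le h b)).csSup_eq]

theorem transferBelow_congr {le : P → P → Prop} {h h' : P → ℝ} {b : P}
    (hh' : ∀ a, le a b → a ≠ b → h a = h' a) : transferBelow le h b = transferBelow le h' b := by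
  refine congrArg sSup (Set.image_congr fun C hC => Finset.sum_congr rfl fun a ha => ?_)
  exact hh' a (hC.2 a ha).1 (hC.2 a ha).2

theorem transferBelow_mem [Finite P] {le : P → P → Prop} {h : P → ℝ} {b : P} (S : AddSubgroup ℝ)
    (hS : ∀ a, le a b → a ≠ b → h a ∈ S) : transferBelow le h b ∈ S := by
  obtain ⟨C, hC, hsum⟩ := (isGreatest_transferBelow le h b).1
  exact hsum ▸ S.sum_mem fun a ha => hS a (hC.2 a ha).1 (hC.2 a ha).2

end Transfer

section DoubleTransfer

variable {P : Type*}

theorem Compatible.wellFounded [Finite P] {lep lem : P → P → Prop}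
    (hcomp : Compatible P lep lem) : WellFounded fun a b => a ≠ b ∧ (lep a b ∨ lem a b) := by
  obtain ⟨l, hl, hpl, hml⟩ := hcomp
  let lt (a b : P) : Prop := l a b ∧ a ≠ b
  have : IsTrans P lt := ⟨fun a b c hab hbc =>
    ⟨hl.trans a b c hab.1 hbc.1, fun hac => hbc.2 (hl.antisymm b c hbc.1 (hac ▸ hab.1))⟩⟩
  have : Std.Irrefl lt := ⟨fun a h => h.2 rfl⟩
  exact Subrelation.wf (fun {a b} h => ⟨h.2.elim (hpl a b) (hml a b), h.1⟩)
    (Finite.wellFounded_of_trans_of_irrefl lt)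

noncomputable def doubleTransferBelow (lep lem : P → P → Prop) (g : P → ℝ) (b : P) : ℝ :=
  transferBelow lep (fun a => max (g a) 0) b - transferBelow lem (fun a => max (-(g a)) 0) b

theorem doubleTransfer_eq_add_doubleTransferBelow [Fintype P] {lep lem : P → P → Prop}
    (hp : ∀ a, lep a a) (hm : ∀ a, lem a a) (g : P → ℝ) :
    doubleTransfer lep lem g = g + doubleTransferBelow lep lem g := by
  funext b
  simp only [doubleTransfer, doubleTransferBelow, Pi.add_apply,
    transferInv_eq_add_transferBelow hp, transferInv_eq_add_transferBelow hm]
  linarith [max_zero_sub_max_neg_zero_eq_self (g b)]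

theorem dependsOnPredecessors_doubleTransferBelow (lep lem : P → P → Prop) :
    DependsOnPredecessors (fun a b => a ≠ b ∧ (lep a b ∨ lem a b))
      (doubleTransferBelow lep lem) := by
  intro g g' b hgg'
  exact congrArg₂ (· - ·) (transferBelow_congr fun a hab hne => by rw [hgg' a ⟨hne, .inl hab⟩])
    (transferBelow_congr fun a hab hne => by rw [hgg' a ⟨hne, .inr hab⟩])

theorem doubleTransferBelow_mem_range_intCast [Finite P] {lep lem : P → P → Prop} {g : P → ℝ}
    {b : P} (hg : ∀ a, a ≠ b ∧ (lep a b ∨ lem a b) → g a ∈ (Int.castAddHom ℝ).range) :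
    doubleTransferBelow lep lem g b ∈ (Int.castAddHom ℝ).range := by
  have max_zero_mem {x : ℝ} (hx : x ∈ (Int.castAddHom ℝ).range) :
      max x 0 ∈ (Int.castAddHom ℝ).range := by
    obtain ⟨m, rfl⟩ := hx
    exact ⟨max m 0, by simp⟩
  refine AddSubgroup.sub_mem _ (transferBelow_mem _ fun a hab hne => ?_)
    (transferBelow_mem _ fun a hab hne => ?_)
  · exact max_zero_mem (hg a ⟨hne, .inl hab⟩)
  · exact max_zero_mem (neg_mem (hg a ⟨hne, .inr hab⟩))

end DoubleTransfer

/-- For a compatible double poset, the double transfer map `Ψ` is a bijection of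
`ℝ^P` onto itself and restricts to a bijection of `ℤ^P` onto `ℤ^P`. -/
theorem doubleTransfer_bijective_and_lattice_preserving
    (P : Type*) [Fintype P] (lep lem : P → P → Prop)
    (hp : IsPartialOrder P lep) (hm : IsPartialOrder P lem)
    (hcomp : Compatible P lep lem) :
    Function.Bijective (doubleTransfer lep lem) ∧
    Set.BijOn (doubleTransfer lep lem)
      {g : P → ℝ | ∀ a, ∃ m : ℤ, g a = (m : ℝ)}
      {g : P → ℝ | ∀ a, ∃ m : ℤ, g a = (m : ℝ)} := by
  have hΨ : doubleTransfer lep lem = fun g => g + doubleTransferBelow lep lem g :=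
    funext (doubleTransfer_eq_add_doubleTransferBelow hp.refl hm.refl)
  have hℤ : {g : P → ℝ | ∀ a, ∃ m : ℤ, g a = (m : ℝ)} =
      {g | ∀ a, g a ∈ (Int.castAddHom ℝ).range} := by
    simp only [AddMonoidHom.mem_range, Int.coe_castAddHom, eq_comm]
  rw [hΨ, hℤ]
  exact ⟨bijective_add_of_dependsOnPredecessors hcomp.wellFounded
      (dependsOnPredecessors_doubleTransferBelow lep lem),
    bijOn_add_of_dependsOnPredecessors hcomp.wellFounded
      (dependsOnPredecessors_doubleTransferBelow lep lem) _
      fun _ _ => doubleTransferBelow_mem_range_intCast⟩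
end

section
/- Let (P,⪯₊,⪯₋) be a compatible double poset and let Ψ : ℝ^P → ℝ^P be the double transfer map, Ψ(g) = Φ_{⪯₊}(g⁺) − Φ_{⪯₋}(g⁻). Then the map (g,t) ↦ (Ψ(g), t) maps the double chain polytope onto the double order polytope: {(Ψ(g), t) : (g,t) ∈ T_C(P,⪯₊,⪯₋)} = T_O(P,⪯₊,⪯₋). -/
/-!
Both double polytopes are convex hulls of two convex sets placed at heights `1` and `-1`, so
their slice at height `t ∈ [-1, 1]` is `(1 + t) • A - (1 - t) • B`. A point `g` lies in the slice
of the double chain polytope iff `g⁺ ∈ (1 + t) • C(P, ⪯₊)` and `g⁻ ∈ (1 - t) • C(P, ⪯₋)`, and the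
transfer map `Φ` sends `c • C(P, ⪯)` into `c • O(P, ⪯)`; this gives one inclusion.

Conversely, let `f = F₊ - F₋` lie in the slice of the double order polytope. Since
`Φ h x = h x + Φ (update h x 0) x`, the equation `Ψ g x = f x` determines `g x` from the values of
`g` strictly below `x` in `⪯₊` and in `⪯₋`. A common linear extension makes this a well-founded
recursion, and by induction along it the solution satisfies `Φ g⁺ ≤ F₊` and `Φ g⁻ ≤ F₋`, which
bounds the chain sums of `g⁺` and `g⁻` and puts `g` in the slice of the double chain polytope.
-/

open Set Pointwise

/-- The order polytope of a finite poset `(P, le)`: order-preserving maps into `[0,1]`. -/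
def orderPoly (P : Type*) [Fintype P] (le : P → P → Prop) : Set (P → ℝ) :=
  {f | (∀ a, 0 ≤ f a ∧ f a ≤ 1) ∧ ∀ a b, le a b → f a ≤ f b}

/-- The chain polytope of a finite poset `(P, le)`. -/
def chainPoly (P : Type*) [Fintype P] (le : P → P → Prop) : Set (P → ℝ) :=
  {g | (∀ a, 0 ≤ g a) ∧
    ∀ C : Finset P, (∀ a ∈ C, ∀ b ∈ C, le a b ∨ le b a) → ∑ a ∈ C, g a ≤ 1}

/-- The double order polytope `T_O(P, lep, lem)`. -/
def doubleOrderPoly (P : Type*) [Fintype P] (lep lem : P → P → Prop) :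
    Set ((P → ℝ) × ℝ) :=
  convexHull ℝ
    (((fun f => (f, (1 : ℝ))) '' ((2 : ℝ) • orderPoly P lep)) ∪
     ((fun f => (f, (-1 : ℝ))) '' ((-2 : ℝ) • orderPoly P lem)))

/-- The double chain polytope `T_C(P, lep, lem)`. -/
def doubleChainPoly (P : Type*) [Fintype P] (lep lem : P → P → Prop) :
    Set ((P → ℝ) × ℝ) :=
  convexHull ℝ
    (((fun g => (g, (1 : ℝ))) '' ((2 : ℝ) • chainPoly P lep)) ∪
     ((fun g => (g, (-1 : ℝ))) '' ((-2 : ℝ) • chainPoly P lem)))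

section Chain

variable {P : Type*} {le : P → P → Prop}

def IsChainTo (le : P → P → Prop) (C : Finset P) (b : P) : Prop :=
  (∀ a ∈ C, ∀ a' ∈ C, le a a' ∨ le a' a) ∧ b ∈ C ∧ ∀ a ∈ C, le a b

theorem IsChainTo.singleton [Std.Refl le] (b : P) : IsChainTo le {b} b := by
  simp [IsChainTo, refl_of le b]

theorem IsChainTo.insert [DecidableEq P] [IsPreorder P le] {C : Finset P} {a b : P}
    (hC : IsChainTo le C a) (hab : le a b) : IsChainTo le (insert b C) b := by
  obtain ⟨hchain, -, hCa⟩ := hC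
  have hb : le b b := refl_of le b
  have hCb : ∀ c ∈ C, le c b := fun c hc => trans_of le (hCa c hc) hab
  refine ⟨?_, Finset.mem_insert_self b C, ?_⟩
  · simp only [Finset.mem_insert, forall_eq_or_imp]
    exact ⟨⟨Or.inl hb, fun c hc => Or.inr (hCb c hc)⟩,
      fun c hc => ⟨Or.inl (hCb c hc), hchain c hc⟩⟩
  · simpa [hb] using hCb

theorem exists_isChainTo [IsPreorder P le] {C : Finset P}
    (hC : ∀ a ∈ C, ∀ a' ∈ C, le a a' ∨ le a' a) (hne : C.Nonempty) :
    ∃ b ∈ C, IsChainTo le C b := by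
  have : Nonempty C := hne.to_subtype
  have hdir : Directed le (Subtype.val : C → P) := fun a a' =>
    (hC a a.2 a' a'.2).elim (fun h => ⟨a', h, refl_of le _⟩) (fun h => ⟨a, refl_of le _, h⟩)
  obtain ⟨b, hb⟩ := hdir.finset_le Finset.univ
  exact ⟨b, b.2, hC, b.2, fun a ha => hb ⟨a, ha⟩ (Finset.mem_univ _)⟩

theorem sum_eq_add_sum_update [DecidableEq P] {C : Finset P} {x : P} (hxC : x ∈ C) (h : P → ℝ) :
    ∑ a ∈ C, h a = h x + ∑ a ∈ C, Function.update h x 0 a := by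
  rw [Finset.sum_update_of_mem hxC, zero_add, Finset.sdiff_singleton_eq_erase,
    Finset.add_sum_erase C h hxC]

end Chain

section TransferInv

variable {P : Type*} [Fintype P] {le : P → P → Prop} {h h₁ h₂ : P → ℝ} {b x : P}

theorem transferInv_eq_sSup (le : P → P → Prop) (h : P → ℝ) (b : P) :
    transferInv le h b = sSup {s | ∃ C, IsChainTo le C b ∧ s = ∑ a ∈ C, h a} := by
  simp only [transferInv, IsChainTo, and_assoc]

theorem finite_chainSums (le : P → P → Prop) (h : P → ℝ) (b : P) :
    {s | ∃ C, IsChainTo le C b ∧ s = ∑ a ∈ C, h a}.Finite := by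
  refine (Set.finite_range fun C : Finset P => ∑ a ∈ C, h a).subset ?_
  rintro s ⟨C, -, rfl⟩
  exact ⟨C, rfl⟩

theorem sum_le_transferInv {C : Finset P} (hC : IsChainTo le C b) :
    ∑ a ∈ C, h a ≤ transferInv le h b := by
  rw [transferInv_eq_sSup]
  exact le_csSup (finite_chainSums le h b).bddAbove ⟨C, hC, rfl⟩

theorem exists_sum_eq_transferInv [Std.Refl le] (h : P → ℝ) (b : P) :
    ∃ C, IsChainTo le C b ∧ transferInv le h b = ∑ a ∈ C, h a := by
  rw [transferInv_eq_sSup]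
  exact Set.Nonempty.csSup_mem (s := {s | ∃ C, IsChainTo le C b ∧ s = ∑ a ∈ C, h a})
    ⟨_, {b}, IsChainTo.singleton b, rfl⟩ (finite_chainSums le h b)

theorem le_transferInv [Std.Refl le] (h : P → ℝ) (b : P) : h b ≤ transferInv le h b := by
  simpa using sum_le_transferInv (h := h) (IsChainTo.singleton (le := le) b)

theorem transferInv_mono [IsPreorder P le] (hh : ∀ a, 0 ≤ h a) {a b : P} (hab : le a b) :
    transferInv le h a ≤ transferInv le h b := by
  classical
  obtain ⟨C, hC, hsum⟩ := exists_sum_eq_transferInv (le := le) h a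
  calc transferInv le h a = ∑ c ∈ C, h c := hsum
    _ ≤ ∑ c ∈ insert b C, h c :=
      Finset.sum_le_sum_of_subset_of_nonneg (Finset.subset_insert b C) fun c _ _ => hh c
    _ ≤ transferInv le h b := sum_le_transferInv (hC.insert hab)

theorem transferInv_congr (h12 : ∀ a, le a b → h₁ a = h₂ a) :
    transferInv le h₁ b = transferInv le h₂ b := by
  simp only [transferInv_eq_sSup]
  congr 1
  ext s
  refine exists_congr fun C => and_congr_right fun hC => ?_
  rw [Finset.sum_congr rfl fun a ha => h12 a (hC.2.2 a ha)]

/-- `Φ (update h x 0) x` is the best chain sum strictly below `x`, so this is the recursion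
`Φ h x = h x + max (0, max_{y < x} Φ h y)` without a case distinction. -/
theorem transferInv_eq_add_update [DecidableEq P] [Std.Refl le] (h : P → ℝ) (x : P) :
    transferInv le h x = h x + transferInv le (Function.update h x 0) x := by
  obtain ⟨C, hC, hsum⟩ := exists_sum_eq_transferInv (le := le) h x
  obtain ⟨D, hD, hsum'⟩ := exists_sum_eq_transferInv (le := le) (Function.update h x 0) x
  apply le_antisymm
  · rw [hsum, sum_eq_add_sum_update hC.2.1]
    gcongr
    exact sum_le_transferInv hC
  · rw [hsum', ← sum_eq_add_sum_update hD.2.1]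
    exact sum_le_transferInv hD

theorem transferInv_update_congr [DecidableEq P] (h12 : ∀ a, le a x → a ≠ x → h₁ a = h₂ a) :
    transferInv le (Function.update h₁ x 0) x = transferInv le (Function.update h₂ x 0) x := by
  refine transferInv_congr fun a hax => ?_
  rcases eq_or_ne a x with rfl | hne
  · simp
  · simp [hne, h12 a hax hne]

theorem transferInv_update_le [DecidableEq P] [IsPreorder P le] {M : ℝ} (hM : 0 ≤ M)
    (hbelow : ∀ y, le y x → y ≠ x → transferInv le h y ≤ M) :
    transferInv le (Function.update h x 0) x ≤ M := by
  obtain ⟨C, hC, hsum⟩ := exists_sum_eq_transferInv (le := le) (Function.update h x 0) x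
  rw [hsum, Finset.sum_update_of_mem hC.2.1, zero_add, Finset.sdiff_singleton_eq_erase]
  rcases (C.erase x).eq_empty_or_nonempty with hempty | hne
  · simpa [hempty] using hM
  obtain ⟨y, hy, hyC⟩ := exists_isChainTo (fun a ha a' ha' =>
    hC.1 a (Finset.mem_of_mem_erase ha) a' (Finset.mem_of_mem_erase ha')) hne
  calc ∑ a ∈ C.erase x, h a ≤ transferInv le h y := sum_le_transferInv hyC
    _ ≤ M := hbelow y (hC.2.2 y (Finset.mem_of_mem_erase hy)) (Finset.ne_of_mem_erase hy)

end TransferInv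

section Polytopes

variable {P : Type*} [Fintype P] {le : P → P → Prop} {c : ℝ} {h : P → ℝ}

theorem convex_orderPoly (le : P → P → Prop) : Convex ℝ (orderPoly P le) := by
  intro f hf g hg p q hp hq hpq
  simp only [orderPoly, Set.mem_ofPred_eq, Pi.add_apply, Pi.smul_apply, smul_eq_mul] at hf hg ⊢
  refine ⟨fun a => ⟨?_, ?_⟩, fun a b hab => ?_⟩
  · nlinarith [hf.1 a, hg.1 a]
  · nlinarith [hf.1 a, hg.1 a]
  · nlinarith [hf.2 a b hab, hg.2 a b hab]

theorem convex_chainPoly (le : P → P → Prop) : Convex ℝ (chainPoly P le) := by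
  intro f hf g hg p q hp hq hpq
  simp only [chainPoly, Set.mem_ofPred_eq, Pi.add_apply, Pi.smul_apply, smul_eq_mul] at hf hg ⊢
  refine ⟨fun a => by nlinarith [hf.1 a, hg.1 a], fun C hC => ?_⟩
  rw [Finset.sum_add_distrib, ← Finset.mul_sum, ← Finset.mul_sum]
  nlinarith [hf.2 C hC, hg.2 C hC]

theorem zero_mem_orderPoly (le : P → P → Prop) : (0 : P → ℝ) ∈ orderPoly P le :=
  ⟨fun _ => by simp, fun _ _ _ => le_rfl⟩

theorem zero_mem_chainPoly (le : P → P → Prop) : (0 : P → ℝ) ∈ chainPoly P le :=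
  ⟨fun _ => le_rfl, fun _ _ => by simp⟩

theorem mem_smul_orderPoly_iff (hc : 0 ≤ c) {f : P → ℝ} :
    f ∈ c • orderPoly P le ↔ (∀ a, 0 ≤ f a ∧ f a ≤ c) ∧ ∀ a b, le a b → f a ≤ f b := by
  rcases hc.eq_or_lt with rfl | hc
  · rw [Set.zero_smul_set ⟨0, zero_mem_orderPoly le⟩, Set.mem_zero]
    refine ⟨by rintro rfl; simp, fun hf => funext fun a => ?_⟩
    exact le_antisymm (hf.1 a).2 (hf.1 a).1
  · rw [Set.mem_smul_set_iff_inv_smul_mem₀ hc.ne']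
    simp [orderPoly, mul_nonneg_iff_of_pos_left, inv_mul_le_iff₀, hc]

theorem mem_smul_chainPoly_iff [Std.Refl le] (hc : 0 ≤ c) :
    h ∈ c • chainPoly P le ↔ (∀ a, 0 ≤ h a) ∧
      ∀ C : Finset P, (∀ a ∈ C, ∀ b ∈ C, le a b ∨ le b a) → ∑ a ∈ C, h a ≤ c := by
  rcases hc.eq_or_lt with rfl | hc
  · rw [Set.zero_smul_set ⟨0, zero_mem_chainPoly le⟩, Set.mem_zero]
    refine ⟨by rintro rfl; simp, fun hh => funext fun a => le_antisymm ?_ (hh.1 a)⟩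
    simpa using hh.2 {a} (by simp [refl_of le a])
  · rw [Set.mem_smul_set_iff_inv_smul_mem₀ hc.ne']
    simp [chainPoly, ← Finset.mul_sum, mul_nonneg_iff_of_pos_left, inv_mul_le_iff₀, hc]

theorem transferInv_mem_smul_orderPoly [IsPreorder P le] (hc : 0 ≤ c)
    (hh : h ∈ c • chainPoly P le) : transferInv le h ∈ c • orderPoly P le := by
  rw [mem_smul_chainPoly_iff hc] at hh
  refine (mem_smul_orderPoly_iff hc).2 ⟨fun b => ⟨(hh.1 b).trans (le_transferInv h b), ?_⟩,
    fun a b hab => transferInv_mono hh.1 hab⟩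
  obtain ⟨C, hC, hsum⟩ := exists_sum_eq_transferInv (le := le) h b
  exact hsum ▸ hh.2 C hC.1

theorem mem_smul_chainPoly_of_transferInv_le [IsPreorder P le] (hc : 0 ≤ c)
    (hh : ∀ a, 0 ≤ h a) (hbound : ∀ b, transferInv le h b ≤ c) : h ∈ c • chainPoly P le := by
  refine (mem_smul_chainPoly_iff hc).2 ⟨hh, fun C hC => ?_⟩
  rcases C.eq_empty_or_nonempty with rfl | hne
  · simpa using hc
  obtain ⟨b, -, hCb⟩ := exists_isChainTo hC hne
  exact (sum_le_transferInv hCb).trans (hbound b)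

theorem mem_smul_chainPoly_of_le [Std.Refl le] (hc : 0 ≤ c) {h' : P → ℝ}
    (h0 : ∀ a, 0 ≤ h' a) (hle : ∀ a, h' a ≤ h a) (hh : h ∈ c • chainPoly P le) :
    h' ∈ c • chainPoly P le := by
  rw [mem_smul_chainPoly_iff hc] at hh ⊢
  exact ⟨h0, fun C hC => (Finset.sum_le_sum fun a _ => hle a).trans (hh.2 C hC)⟩

theorem mem_smul_chainPoly_sub_smul_chainPoly_iff {lep lem : P → P → Prop} [Std.Refl lep]
    [Std.Refl lem] {d : ℝ} (hc : 0 ≤ c) (hd : 0 ≤ d) {g : P → ℝ} :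
    g ∈ c • chainPoly P lep - d • chainPoly P lem ↔
      (fun a => max (g a) 0) ∈ c • chainPoly P lep ∧
        (fun a => max (-(g a)) 0) ∈ d • chainPoly P lem := by
  refine ⟨?_, fun ⟨hp, hm⟩ => ?_⟩
  · rintro ⟨p, hp, q, hq, rfl⟩
    have hp0 := ((mem_smul_chainPoly_iff hc).1 hp).1
    have hq0 := ((mem_smul_chainPoly_iff hd).1 hq).1
    exact ⟨mem_smul_chainPoly_of_le hc (fun a => le_max_right _ _)
        (fun a => max_le (by simpa using hq0 a) (hp0 a)) hp,
      mem_smul_chainPoly_of_le hd (fun a => le_max_right _ _)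
        (fun a => max_le (by simpa using hp0 a) (hq0 a)) hq⟩
  · convert Set.sub_mem_sub hp hm
    exact funext fun a => (max_zero_sub_eq_self (g a)).symm

end Polytopes

theorem mem_convexHull_levels_iff {E : Type*} [AddCommGroup E] [Module ℝ E] {A B : Set E}
    (hA : Convex ℝ A) (hB : Convex ℝ B) (hA0 : A.Nonempty) (hB0 : B.Nonempty) {x : E × ℝ} :
    x ∈ convexHull ℝ ((fun a => (a, (1 : ℝ))) '' ((2 : ℝ) • A) ∪
        (fun b => (b, (-1 : ℝ))) '' ((-2 : ℝ) • B)) ↔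
      x.2 ∈ Set.Icc (-1) 1 ∧ x.1 ∈ (1 + x.2) • A - (1 - x.2) • B := by
  have htop : Convex ℝ ((fun a => (a, (1 : ℝ))) '' ((2 : ℝ) • A)) := by
    rw [← Set.prod_singleton]; exact (hA.smul 2).prod (convex_singleton 1)
  have hbot : Convex ℝ ((fun b => (b, (-1 : ℝ))) '' ((-2 : ℝ) • B)) := by
    rw [← Set.prod_singleton]; exact (hB.smul (-2)).prod (convex_singleton (-1))
  rw [htop.convexHull_union hbot (hA0.smul_set.image _) (hB0.smul_set.image _), mem_convexJoin]
  constructor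
  · rintro ⟨_, ⟨_, ⟨a, ha, rfl⟩, rfl⟩, _, ⟨_, ⟨b, hb, rfl⟩, rfl⟩, p, q, hp, hq, hpq, rfl⟩
    obtain rfl : q = 1 - p := by linarith
    have hsum : (2 * p) • a - (2 * (1 - p)) • b = p • (2 : ℝ) • a + (1 - p) • (-2 : ℝ) • b := by
      module
    simp only [Prod.smul_mk, Prod.mk_add_mk, smul_eq_mul, mul_one, mul_neg_one, ← hsum]
    refine ⟨⟨by linarith, by linarith⟩, Set.sub_mem_sub ?_ ?_⟩
    · convert Set.smul_mem_smul_set ha using 2; ring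
    · convert Set.smul_mem_smul_set hb using 2; ring
  · rintro ⟨⟨ht1, ht2⟩, _, ⟨a, ha, rfl⟩, _, ⟨b, hb, rfl⟩, hx⟩
    refine ⟨_, ⟨_, Set.smul_mem_smul_set ha, rfl⟩, _, ⟨_, Set.smul_mem_smul_set hb, rfl⟩,
      (1 + x.2) / 2, (1 - x.2) / 2, by linarith, by linarith, by ring, ?_⟩
    ext
    · simp [← hx]; module
    · simp; ring

theorem WellFounded.exists_isFixedPt {α β : Type*} [Nonempty β] {r : α → α → Prop}
    (hr : WellFounded r) (T : (α → β) → α → β)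
    (hT : ∀ g₁ g₂ x, (∀ y, r y x → g₁ y = g₂ y) → T g₁ x = T g₂ x) :
    ∃ g, Function.IsFixedPt T g := by
  classical
  let g : α → β := hr.fix fun x g' => T (fun y => if hy : r y x then g' y hy else
    Classical.arbitrary β) x
  refine ⟨g, funext fun x => ?_⟩
  rw [show g x = _ from hr.fix_eq _ x]
  exact hT _ _ x fun y hy => by simp [hy, g]

theorem Compatible.exists_wellFounded {P : Type*} [Finite P] {lep lem : P → P → Prop}
    (hcomp : Compatible P lep lem) :
    ∃ r : P → P → Prop, WellFounded r ∧ (∀ a b, lep a b → a ≠ b → r a b) ∧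
      ∀ a b, lem a b → a ≠ b → r a b := by
  obtain ⟨l, hl, hlp, hlm⟩ := hcomp
  let r a b := l a b ∧ a ≠ b
  have : IsTrans P r := ⟨fun a b c hab hbc =>
    ⟨trans_of l hab.1 hbc.1, fun hac => hab.2 (antisymm_of l hab.1 (hac ▸ hbc.1))⟩⟩
  have : Std.Irrefl r := ⟨fun a ha => ha.2 rfl⟩
  exact ⟨r, Finite.wellFounded_of_trans_of_irrefl r, fun a b hab hne => ⟨hlp a b hab, hne⟩,
    fun a b hab hne => ⟨hlm a b hab, hne⟩⟩

section DoubleHull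

variable {P : Type*} [Fintype P] {lep lem : P → P → Prop}

theorem mem_doubleChainPoly_iff [Std.Refl lep] [Std.Refl lem] {g : P → ℝ} {t : ℝ} :
    (g, t) ∈ doubleChainPoly P lep lem ↔ t ∈ Set.Icc (-1) 1 ∧
      (fun a => max (g a) 0) ∈ (1 + t) • chainPoly P lep ∧
        (fun a => max (-(g a)) 0) ∈ (1 - t) • chainPoly P lem := by
  rw [doubleChainPoly, mem_convexHull_levels_iff (convex_chainPoly lep) (convex_chainPoly lem)
    ⟨0, zero_mem_chainPoly lep⟩ ⟨0, zero_mem_chainPoly lem⟩]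
  exact and_congr_right fun ht =>
    mem_smul_chainPoly_sub_smul_chainPoly_iff (by linarith [ht.1]) (by linarith [ht.2])

theorem mem_doubleOrderPoly_iff {f : P → ℝ} {t : ℝ} :
    (f, t) ∈ doubleOrderPoly P lep lem ↔
      t ∈ Set.Icc (-1) 1 ∧ f ∈ (1 + t) • orderPoly P lep - (1 - t) • orderPoly P lem :=
  mem_convexHull_levels_iff (convex_orderPoly lep) (convex_orderPoly lem)
    ⟨0, zero_mem_orderPoly lep⟩ ⟨0, zero_mem_orderPoly lem⟩

end DoubleHull

section Inverse

variable {P : Type*} [Fintype P] {lep lem : P → P → Prop} [IsPreorder P lep] [IsPreorder P lem]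

theorem exists_doubleTransfer_eq {r : P → P → Prop} (hr : WellFounded r)
    (hpr : ∀ a b, lep a b → a ≠ b → r a b) (hmr : ∀ a b, lem a b → a ≠ b → r a b)
    {Fp Fm : P → ℝ} (hFp0 : ∀ a, 0 ≤ Fp a) (hFm0 : ∀ a, 0 ≤ Fm a)
    (hFp : ∀ a b, lep a b → Fp a ≤ Fp b) (hFm : ∀ a b, lem a b → Fm a ≤ Fm b) :
    ∃ g : P → ℝ, (∀ x, transferInv lep (fun a => max (g a) 0) x ≤ Fp x) ∧
      (∀ x, transferInv lem (fun a => max (-(g a)) 0) x ≤ Fm x) ∧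
      doubleTransfer lep lem g = Fp - Fm := by
  classical
  obtain ⟨g, hg⟩ := hr.exists_isFixedPt (fun g x => Fp x - Fm x
      - transferInv lep (Function.update (fun a => max (g a) 0) x 0) x
      + transferInv lem (Function.update (fun a => max (-(g a)) 0) x 0) x) <| by
    intro g₁ g₂ x hx
    rw [transferInv_update_congr (le := lep) fun a hax hne => by rw [hx a (hpr a x hax hne)],
      transferInv_update_congr (le := lem) fun a hax hne => by rw [hx a (hmr a x hax hne)]]
  set Bp := fun x => transferInv lep (Function.update (fun a => max (g a) 0) x 0) x
  set Bm := fun x => transferInv lem (Function.update (fun a => max (-(g a)) 0) x 0) x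
  have hgx : ∀ x, g x = Fp x - Fm x - Bp x + Bm x := fun x => (congrFun hg x).symm
  have hΦp : ∀ x, transferInv lep (fun a => max (g a) 0) x = max (g x) 0 + Bp x :=
    fun x => transferInv_eq_add_update _ x
  have hΦm : ∀ x, transferInv lem (fun a => max (-(g a)) 0) x = max (-(g x)) 0 + Bm x :=
    fun x => transferInv_eq_add_update _ x
  have hbound : ∀ x, transferInv lep (fun a => max (g a) 0) x ≤ Fp x ∧
      transferInv lem (fun a => max (-(g a)) 0) x ≤ Fm x := by
    intro x
    induction x using hr.induction with
    | _ x ih =>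
      have hBp : Bp x ≤ Fp x := transferInv_update_le (hFp0 x) fun y hy hne =>
        (ih y (hpr y x hy hne)).1.trans (hFp y x hy)
      have hBm : Bm x ≤ Fm x := transferInv_update_le (hFm0 x) fun y hy hne =>
        (ih y (hmr y x hy hne)).2.trans (hFm y x hy)
      rw [hΦp, hΦm]
      have hx := hgx x
      rcases le_total (g x) 0 with hneg | hpos
      · rw [max_eq_right hneg, max_eq_left (neg_nonneg.2 hneg)]
        constructor <;> linarith
      · rw [max_eq_left hpos, max_eq_right (neg_nonpos.2 hpos)]
        constructor <;> linarith
  refine ⟨g, fun x => (hbound x).1, fun x => (hbound x).2, funext fun x => ?_⟩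
  simp only [doubleTransfer, Pi.sub_apply, hΦp, hΦm]
  linarith [max_zero_sub_eq_self (g x), hgx x]

theorem doubleTransfer_mem_doubleOrderPoly {g : P → ℝ} {t : ℝ}
    (hg : (g, t) ∈ doubleChainPoly P lep lem) :
    (doubleTransfer lep lem g, t) ∈ doubleOrderPoly P lep lem := by
  obtain ⟨ht, hgp, hgm⟩ := mem_doubleChainPoly_iff.1 hg
  exact mem_doubleOrderPoly_iff.2 ⟨ht, Set.sub_mem_sub
    (transferInv_mem_smul_orderPoly (by linarith [ht.1]) hgp)
    (transferInv_mem_smul_orderPoly (by linarith [ht.2]) hgm)⟩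

theorem exists_mem_doubleChainPoly_doubleTransfer_eq (hcomp : Compatible P lep lem)
    {f : P → ℝ} {t : ℝ} (hf : (f, t) ∈ doubleOrderPoly P lep lem) :
    ∃ g, (g, t) ∈ doubleChainPoly P lep lem ∧ doubleTransfer lep lem g = f := by
  obtain ⟨ht, Fp, hFp, Fm, hFm, rfl⟩ := mem_doubleOrderPoly_iff.1 hf
  have h1 : 0 ≤ 1 + t := by linarith [ht.1]
  have h2 : 0 ≤ 1 - t := by linarith [ht.2]
  obtain ⟨hFp0, hFp⟩ := (mem_smul_orderPoly_iff h1).1 hFp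
  obtain ⟨hFm0, hFm⟩ := (mem_smul_orderPoly_iff h2).1 hFm
  obtain ⟨r, hr, hpr, hmr⟩ := hcomp.exists_wellFounded
  obtain ⟨g, hgp, hgm, hΨ⟩ := exists_doubleTransfer_eq hr hpr hmr (fun a => (hFp0 a).1)
    (fun a => (hFm0 a).1) hFp hFm
  refine ⟨g, mem_doubleChainPoly_iff.2 ⟨ht, ?_, ?_⟩, hΨ⟩
  · exact mem_smul_chainPoly_of_transferInv_le h1 (fun a => le_max_right _ _)
      fun b => (hgp b).trans (hFp0 b).2
  · exact mem_smul_chainPoly_of_transferInv_le h2 (fun a => le_max_right _ _)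
      fun b => (hgm b).trans (hFm0 b).2

end Inverse

/-- For a compatible double poset, `(g,t) ↦ (Ψ(g),t)` maps the double chain polytope
onto the double order polytope. -/
theorem doubleTransfer_image_doubleChainPoly
    (P : Type*) [Fintype P] (lep lem : P → P → Prop)
    (hp : IsPartialOrder P lep) (hm : IsPartialOrder P lem)
    (hcomp : Compatible P lep lem) :
    (fun x : (P → ℝ) × ℝ => (doubleTransfer lep lem x.1, x.2)) ''
        doubleChainPoly P lep lem =
      doubleOrderPoly P lep lem := by
  refine Set.Subset.antisymm ?_ fun ⟨f, t⟩ hf => ?_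
  · rintro _ ⟨⟨g, t⟩, hg, rfl⟩
    exact doubleTransfer_mem_doubleOrderPoly hg
  · obtain ⟨g, hg, rfl⟩ := exists_mem_doubleChainPoly_doubleTransfer_eq hcomp hf
    exact ⟨(g, t), hg, rfl⟩
end
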